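/- Let ϖ ∈ X be a dominant weight with (ϖ, α∨) ≤ 1 for every simple root α. Let λ = wϖ with w ∈ W of minimal length such that λ = wϖ. Suppose there is a simple root α_j such that (ϖ, α_j∨) = 1 and ℓ(w s_j) > ℓ(w). Let μ ∈ w(ϖ − ω_j) + Wω_j (i.e. μ = w(ϖ − ω_j) + z ω_j for some z ∈ W). Then (μ,μ) ≤ (ϖ,ϖ); and if (μ,μ) = (ϖ,ϖ), then μ = vϖ for some v ∈ W with v ≥ w in the Bruhat order. Consequently μ ≤_a λ. -/

import Mathlib

open scoped InnerProductSpace Classical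

noncomputable section

/-- A reduced crystallographic root system `Φ` spanning a finite-dimensional real inner
product space `V`, together with a choice of simple roots `π` (determining the positive
system), the corresponding fundamental weights `ω`, the reflections `s`, the Weyl group
`W` and the weight lattice `X`. -/
structure RootSystemData (V : Type) [NormedAddCommGroup V] [InnerProductSpace ℝ V]
    [FiniteDimensional ℝ V] where
  /-- the (finite) set of roots -/
  Φ : Finset V
  /-- the rank -/
  r : ℕ
  /-- the simple roots `α₁, …, α_r` -/
  π : Fin r → V
  /-- the fundamental weights `ω₁, …, ω_r` -/
  ω : Fin r → V
  /-- the orthogonal reflection attached to a root -/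
  s : V → (V ≃ₗ[ℝ] V)
  /-- the Weyl group -/
  W : Subgroup (V ≃ₗ[ℝ] V)
  /-- the weight lattice -/
  X : AddSubgroup V
  root_ne_zero : ∀ α ∈ Φ, α ≠ (0 : V)
  root_span : Submodule.span ℝ (Φ : Set V) = ⊤
  reduced : ∀ α ∈ Φ, ∀ c : ℝ, c • α ∈ Φ → c = 1 ∨ c = -1
  crystallographic : ∀ α ∈ Φ, ∀ β ∈ Φ, ∃ n : ℤ, 2 * ⟪β, α⟫_ℝ / ⟪α, α⟫_ℝ = (n : ℝ)
  s_apply : ∀ α ∈ Φ, ∀ v : V, s α v = v - (2 * ⟪v, α⟫_ℝ / ⟪α, α⟫_ℝ) • α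
  refl_stable : ∀ α ∈ Φ, ∀ β ∈ Φ, s α β ∈ Φ
  W_eq : W = Subgroup.closure {g : V ≃ₗ[ℝ] V | ∃ α ∈ Φ, g = s α}
  inner_invariant : ∀ g ∈ W, ∀ u v : V, ⟪g u, g v⟫_ℝ = ⟪u, v⟫_ℝ
  simple_mem : ∀ i, π i ∈ Φ
  simple_indep : LinearIndependent ℝ π
  pos_or_neg : ∀ α ∈ Φ,
      (∃ c : Fin r → ℝ, (∀ i, 0 ≤ c i) ∧ α = ∑ i, c i • π i) ∨
      (∃ c : Fin r → ℝ, (∀ i, 0 ≤ c i) ∧ -α = ∑ i, c i • π i)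
  fund : ∀ i j, 2 * ⟪ω i, π j⟫_ℝ / ⟪π j, π j⟫_ℝ = if i = j then (1 : ℝ) else 0
  X_eq : X = AddSubgroup.closure (Set.range ω)
  X_stable : ∀ g ∈ W, ∀ x ∈ X, g x ∈ X

/-- The pairing `(v, α∨) = 2(v,α)/(α,α)` of a vector with the coroot of `α`. -/
def pairing {V : Type} [NormedAddCommGroup V] [InnerProductSpace ℝ V]
    (v α : V) : ℝ := 2 * ⟪v, α⟫_ℝ / ⟪α, α⟫_ℝ

namespace RootSystemData

variable {V : Type} [NormedAddCommGroup V] [InnerProductSpace ℝ V] [FiniteDimensional ℝ V]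
variable (C : RootSystemData V)

/-- `α` is a nonnegative combination of the simple roots (a positive root, if `α ∈ Φ`). -/
def IsPos (α : V) : Prop := ∃ c : Fin C.r → ℝ, (∀ i, 0 ≤ c i) ∧ α = ∑ i, c i • C.π i

/-- `α` is a nonpositive combination of the simple roots (a negative root, if `α ∈ Φ`). -/
def IsNeg (α : V) : Prop := C.IsPos (-α)

/-- A weight is dominant if it pairs nonnegatively with all simple coroots. -/
def IsDominant (lam : V) : Prop := ∀ i, 0 ≤ pairing lam (C.π i)

/-- The product of the simple reflections along a word. -/
def wordProd (l : List (Fin C.r)) : V ≃ₗ[ℝ] V := (l.map fun i => C.s (C.π i)).prod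

/-- The length of `w`: the least length of an expression of `w` as a product of
simple reflections. -/
def length (w : V ≃ₗ[ℝ] V) : ℕ :=
  sInf {n | ∃ l : List (Fin C.r), l.length = n ∧ C.wordProd l = w}

/-- The (strong) Bruhat order on the Weyl group: `u ≤ v` iff `v` is obtained from `u`
by successively multiplying by reflections, increasing the length at each step. -/
def BruhatLE (u v : V ≃ₗ[ℝ] V) : Prop :=
  Relation.ReflTransGen
    (fun a b => (∃ α ∈ C.Φ, b = a * C.s α) ∧ C.length a < C.length b) u v

/-- The Steinberg weight `e_v = v⁻¹ ⬝ ∑_{i : v⁻¹ α_i < 0} ω_i`. -/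
def steinberg (v : V ≃ₗ[ℝ] V) : V :=
  v⁻¹ (∑ i ∈ Finset.univ.filter (fun i => C.IsNeg (v⁻¹ (C.π i))), C.ω i)

/-- The excellent order on weights: `λ ≤ₑ μ` iff `(λ,λ) < (μ,μ)`, or `λ = wν`, `μ = zν`
for some dominant `ν ∈ X` and `w ≤ z` in the Bruhat order. -/
def ExcLE (lam mu : V) : Prop :=
  ⟪lam, lam⟫_ℝ < ⟪mu, mu⟫_ℝ ∨
    ∃ nu ∈ C.X, C.IsDominant nu ∧
      ∃ w ∈ C.W, ∃ z ∈ C.W, C.BruhatLE w z ∧ lam = w nu ∧ mu = z nu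

/-- The strict excellent order. -/
def ExcLT (lam mu : V) : Prop := C.ExcLE lam mu ∧ lam ≠ mu

/-- The antipodal excellent order: `λ ≤ₐ μ` iff `-λ ≤ₑ -μ`. -/
def AntiLE (lam mu : V) : Prop := C.ExcLE (-lam) (-mu)

/-- The strict antipodal excellent order. -/
def AntiLT (lam mu : V) : Prop := C.AntiLE lam mu ∧ lam ≠ mu

/-- The dominance order: `μ ≤_d ν` iff `ν - μ` is a nonnegative integer combination of
the positive roots. -/
def DomLE (mu nu : V) : Prop :=
  ∃ c : V → ℕ, nu - mu = ∑ α ∈ C.Φ.filter (fun a => C.IsPos a), (c α : ℝ) • α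

theorem omega_mem (i : Fin C.r) : C.ω i ∈ C.X := by
  rw [C.X_eq]; exact AddSubgroup.subset_closure ⟨i, rfl⟩

theorem steinberg_mem {v : V ≃ₗ[ℝ] V} (hv : v ∈ C.W) : C.steinberg v ∈ C.X :=
  C.X_stable _ (inv_mem hv) _ (AddSubgroup.sum_mem _ fun i _ => C.omega_mem i)

/-- The group ring `ℤ[X]` of the weight lattice. -/
abbrev GroupRing := AddMonoidAlgebra ℤ ↥C.X

/-- The basis element `e^λ` of `ℤ[X]`. -/
def expo (x : V) (hx : x ∈ C.X) : C.GroupRing := AddMonoidAlgebra.single ⟨x, hx⟩ 1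

/-- `e^λ`, defined for all `λ : V` (and zero off the lattice). -/
def expoOf (x : V) : C.GroupRing := if hx : x ∈ C.X then C.expo x hx else 0

/-- The coefficient of `e^x` in an element of `ℤ[X]`. -/
def coeff (m : C.GroupRing) (x : ↥C.X) : ℤ := (AddMonoidAlgebra.coeff m : ↥C.X →₀ ℤ) x

/-- The support of an element of `ℤ[X]`. -/
def supp (m : C.GroupRing) : Finset ↥C.X := (AddMonoidAlgebra.coeff m : ↥C.X →₀ ℤ).support

/-- The action of `g ∈ W` on the weight lattice. -/
def actX (g : V ≃ₗ[ℝ] V) (hg : g ∈ C.W) : ↥C.X → ↥C.X :=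
  fun x => ⟨g x, C.X_stable g hg x.1 x.2⟩

/-- The action of `g ∈ W` on `ℤ[X]`, with `e^λ ↦ e^{gλ}`. -/
def wAct (g : V ≃ₗ[ℝ] V) (hg : g ∈ C.W) (m : C.GroupRing) : C.GroupRing :=
  AddMonoidAlgebra.ofCoeff (Finsupp.mapDomain (C.actX g hg) (AddMonoidAlgebra.coeff m))

/-- `m` lies in the invariant subring `ℤ[X]^W`. -/
def IsWInvariant (m : C.GroupRing) : Prop := ∀ g (hg : g ∈ C.W), C.wAct g hg m = m

/-- The parabolic subgroup `W_{Π'}` generated by the simple reflections `s_α, α ∈ Π'`,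
for a subset `Π'` of the simple roots (given by a subset `J` of the index set). -/
def parabolicSubgroup (J : Set (Fin C.r)) : Subgroup (V ≃ₗ[ℝ] V) :=
  Subgroup.closure {g | ∃ i ∈ J, g = C.s (C.π i)}

theorem parabolic_le (J : Set (Fin C.r)) : C.parabolicSubgroup J ≤ C.W := by
  refine (Subgroup.closure_le _).2 ?_
  rintro g ⟨i, _, rfl⟩
  rw [C.W_eq]
  exact Subgroup.subset_closure ⟨C.π i, C.simple_mem i, rfl⟩

/-- `m` lies in the invariant subring `ℤ[X]^H` for a subgroup `H ≤ W`. -/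
def IsInvariantUnder (H : Subgroup (V ≃ₗ[ℝ] V)) (hH : H ≤ C.W) (m : C.GroupRing) : Prop :=
  ∀ g (hg : g ∈ H), C.wAct g (hH hg) m = m

/-- `v` is of minimal length in its coset `v ⬝ W_{Π'}`. -/
def IsMinCosetRep (J : Set (Fin C.r)) (v : V ≃ₗ[ℝ] V) : Prop :=
  v ∈ C.W ∧ ∀ z ∈ C.parabolicSubgroup J, C.length v ≤ C.length (v * z)

/-- The subgroup generated by the simple reflections fixing a given vector. -/
def fixSubgroup (x : V) : Subgroup (V ≃ₗ[ℝ] V) :=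
  Subgroup.closure {g | ∃ i : Fin C.r, C.s (C.π i) x = x ∧ g = C.s (C.π i)}

end RootSystemData

/-!
Write `ϖ = a + ω_j`, where `a = ϖ - ω_j` is dominant because `(ϖ, α_j∨) = 1`, and
`μ = w (a + u ω_j)` with `u = w⁻¹ z`. Then `(ϖ, ϖ) - (μ, μ) = 2 (a, ω_j - u ω_j) ≥ 0`, since
`ω_j - u ω_j` is a nonnegative combination of simple roots. In case of equality that combination
only involves simple roots orthogonal to `a`, and then `u ω_j = u' ω_j` for some `u'` in the
parabolic subgroup `W_J`, `J = {i | (a, α_i∨) = 0}`, which fixes `a`; so `μ = w u' ϖ`. Minimality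
of `w` and `ℓ(w s_j) > ℓ(w)` make `w` send every `α_i`, `i ∈ J`, to a positive root, so the
length increases along `w < w s_{i₁} < w s_{i₁} s_{i₂} < ⋯ < w u'` for a reduced word of `u'`
in `W_J`. Finally `-μ` and `-λ` lie in the orbit of the dominant weight `-w₀ ϖ`, and right
multiplication by `w₀` reverses the Bruhat order.
-/

section Pairing

variable {V : Type} [NormedAddCommGroup V] [InnerProductSpace ℝ V]

lemma pairing_sub_left (u v α : V) : pairing (u - v) α = pairing u α - pairing v α := by
  unfold pairing
  rw [inner_sub_left]
  ring

lemma pairing_smul_left (t : ℝ) (v α : V) : pairing (t • v) α = t * pairing v α := by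
  unfold pairing
  rw [real_inner_smul_left]
  ring

lemma pairing_neg_left (v α : V) : pairing (-v) α = -pairing v α := by
  unfold pairing
  rw [inner_neg_left]
  ring

lemma pairing_neg_right (v α : V) : pairing v (-α) = -pairing v α := by
  unfold pairing
  rw [inner_neg_neg, inner_neg_right]
  ring

end Pairing

namespace RootSystemData

open scoped Pointwise

variable {V : Type} [NormedAddCommGroup V] [InnerProductSpace ℝ V] [FiniteDimensional ℝ V]
  {C : RootSystemData V}

section Reflections

variable {α : V}

lemma inner_self_pos (hα : α ∈ C.Φ) : 0 < ⟪α, α⟫_ℝ :=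
  real_inner_self_pos.2 (C.root_ne_zero α hα)

lemma s_apply_pairing (hα : α ∈ C.Φ) (v : V) : C.s α v = v - pairing v α • α :=
  C.s_apply α hα v

lemma pairing_self (hα : α ∈ C.Φ) : pairing α α = 2 := by
  have := (C.inner_self_pos hα).ne'
  unfold pairing
  field_simp

lemma s_self (hα : α ∈ C.Φ) : C.s α α = -α := by
  rw [C.s_apply_pairing hα, pairing_self hα]
  module

lemma neg_mem_Φ (hα : α ∈ C.Φ) : -α ∈ C.Φ := by
  simpa [C.s_self hα] using C.refl_stable α hα α hα

lemma s_s (hα : α ∈ C.Φ) (v : V) : C.s α (C.s α v) = v := by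
  rw [C.s_apply_pairing hα (C.s α v), C.s_apply_pairing hα v, pairing_sub_left,
    pairing_smul_left, pairing_self hα]
  module

lemma s_mul_self (hα : α ∈ C.Φ) : C.s α * C.s α = 1 :=
  LinearEquiv.ext (C.s_s hα)

lemma s_inv (hα : α ∈ C.Φ) : (C.s α)⁻¹ = C.s α :=
  inv_eq_of_mul_eq_one_right (C.s_mul_self hα)

lemma s_neg (hα : α ∈ C.Φ) : C.s (-α) = C.s α := by
  ext v
  rw [C.s_apply_pairing (C.neg_mem_Φ hα), C.s_apply_pairing hα, pairing_neg_right]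
  module

lemma s_mem_W (hα : α ∈ C.Φ) : C.s α ∈ C.W := by
  rw [C.W_eq]
  exact Subgroup.subset_closure ⟨α, hα, rfl⟩

lemma W_le_stabilizer_Φ : C.W ≤ MulAction.stabilizer (V ≃ₗ[ℝ] V) (C.Φ : Set V) := by
  rw [C.W_eq, Subgroup.closure_le]
  rintro _ ⟨α, hα, rfl⟩
  rw [SetLike.mem_coe, MulAction.mem_stabilizer_iff]
  ext β
  simp only [Set.mem_smul_set, LinearEquiv.smul_def, Finset.mem_coe]
  exact ⟨fun ⟨γ, hγ, h⟩ => h ▸ C.refl_stable α hα γ hγ,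
    fun hβ => ⟨_, C.refl_stable α hα β hβ, C.s_s hα β⟩⟩

lemma apply_mem_Φ {g : V ≃ₗ[ℝ] V} (hg : g ∈ C.W) (hα : α ∈ C.Φ) : g α ∈ C.Φ := by
  have := Set.smul_mem_smul_set (a := g) (show α ∈ (C.Φ : Set V) from hα)
  rwa [MulAction.mem_stabilizer_iff.1 (C.W_le_stabilizer_Φ hg), LinearEquiv.smul_def] at this

lemma pairing_apply_apply {g : V ≃ₗ[ℝ] V} (hg : g ∈ C.W) (u v : V) :
    pairing (g u) (g v) = pairing u v := by
  unfold pairing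
  rw [C.inner_invariant g hg, C.inner_invariant g hg]

lemma conj_s {g : V ≃ₗ[ℝ] V} (hg : g ∈ C.W) (hα : α ∈ C.Φ) :
    g * C.s α * g⁻¹ = C.s (g α) := by
  ext v
  have : pairing (g⁻¹ v) α = pairing v (g α) := by
    simpa using (C.pairing_apply_apply hg (g⁻¹ v) α).symm
  simp only [LinearEquiv.mul_apply]
  rw [C.s_apply_pairing hα, C.s_apply_pairing (C.apply_mem_Φ hg hα), this, map_sub, map_smul]
  simp

end Reflections

section Coordinates

variable (C)

lemma span_simple_eq_top : Submodule.span ℝ (Set.range C.π) = ⊤ := by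
  refine top_le_iff.1 (C.root_span ▸ Submodule.span_le.2 fun α hα => ?_)
  have hsum : ∀ c : Fin C.r → ℝ, ∑ i, c i • C.π i ∈ Submodule.span ℝ (Set.range C.π) :=
    fun c => Submodule.sum_mem _ fun i _ => Submodule.smul_mem _ _ (Submodule.subset_span ⟨i, rfl⟩)
  rcases C.pos_or_neg α hα with ⟨c, _, h⟩ | ⟨c, _, h⟩
  · exact h ▸ hsum c
  · simpa using Submodule.neg_mem _ (show -α ∈ _ from h ▸ hsum c)

def simpleBasis : Module.Basis (Fin C.r) ℝ V :=
  .mk C.simple_indep C.span_simple_eq_top.ge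

def coord (i : Fin C.r) : V →ₗ[ℝ] ℝ := C.simpleBasis.coord i

@[simp] lemma simpleBasis_apply (i : Fin C.r) : C.simpleBasis i = C.π i :=
  Module.Basis.mk_apply _ _ _

lemma coord_simple (i k : Fin C.r) : C.coord i (C.π k) = if k = i then 1 else 0 := by
  rw [coord, Module.Basis.coord_apply, ← simpleBasis_apply, Module.Basis.repr_self,
    Finsupp.single_apply]

lemma sum_coord_smul (v : V) : ∑ i, C.coord i v • C.π i = v := by
  simpa only [coord, Module.Basis.coord_apply, simpleBasis_apply] using C.simpleBasis.sum_repr v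

lemma coord_sum_smul (c : Fin C.r → ℝ) (i : Fin C.r) : C.coord i (∑ k, c k • C.π k) = c i := by
  simp [coord_simple]

lemma inner_eq_sum_coord (a x : V) : ⟪a, x⟫_ℝ = ∑ i, C.coord i x * ⟪a, C.π i⟫_ℝ := by
  conv_lhs => rw [← C.sum_coord_smul x]
  simp [inner_sum, real_inner_smul_right]

lemma apply_eq_sum_coord (f : V →ₗ[ℝ] V) (v : V) : f v = ∑ i, C.coord i v • f (C.π i) := by
  conv_lhs => rw [← C.sum_coord_smul v]
  simp

variable {C} {v : V}

lemma isPos_iff : C.IsPos v ↔ ∀ i, 0 ≤ C.coord i v :=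
  ⟨fun ⟨c, hc, h⟩ i => h ▸ (C.coord_sum_smul c i).symm ▸ hc i,
    fun h => ⟨fun i => C.coord i v, h, (C.sum_coord_smul v).symm⟩⟩

lemma isNeg_iff : C.IsNeg v ↔ ∀ i, C.coord i v ≤ 0 := by
  simp [IsNeg, isPos_iff]

lemma isNeg_neg_iff : C.IsNeg (-v) ↔ C.IsPos v := by
  rw [IsNeg, neg_neg]

lemma isPos_neg_iff : C.IsPos (-v) ↔ C.IsNeg v := Iff.rfl

lemma isPos_simple (i : Fin C.r) : C.IsPos (C.π i) :=
  isPos_iff.2 fun k => by rw [C.coord_simple]; split_ifs <;> norm_num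

lemma eq_zero_of_isPos_of_isNeg (h₁ : C.IsPos v) (h₂ : C.IsNeg v) : v = 0 := by
  rw [isPos_iff] at h₁
  rw [isNeg_iff] at h₂
  rw [← C.sum_coord_smul v]
  simp [fun i => le_antisymm (h₂ i) (h₁ i)]

lemma isPos_or_isNeg (hv : v ∈ C.Φ) : C.IsPos v ∨ C.IsNeg v :=
  C.pos_or_neg v hv

lemma not_isNeg (hv : v ∈ C.Φ) (h : C.IsPos v) : ¬C.IsNeg v :=
  fun h' => C.root_ne_zero v hv (eq_zero_of_isPos_of_isNeg h h')

lemma isPos_of_not_isNeg (hv : v ∈ C.Φ) (h : ¬C.IsNeg v) : C.IsPos v :=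
  (isPos_or_isNeg hv).resolve_right h

lemma isNeg_of_not_isPos (hv : v ∈ C.Φ) (h : ¬C.IsPos v) : C.IsNeg v :=
  (isPos_or_isNeg hv).resolve_left h

lemma isPos_apply_of_support {f : V →ₗ[ℝ] V} {J : Set (Fin C.r)} (hv : C.IsPos v)
    (hsupp : ∀ i ∉ J, C.coord i v = 0) (hf : ∀ i ∈ J, C.IsPos (f (C.π i))) : C.IsPos (f v) := by
  rw [isPos_iff] at hv ⊢
  intro m
  rw [C.apply_eq_sum_coord f v, map_sum]
  refine Finset.sum_nonneg fun i _ => ?_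
  rw [map_smul, smul_eq_mul]
  by_cases hi : i ∈ J
  · exact mul_nonneg (hv i) (isPos_iff.1 (hf i hi) m)
  · simp [hsupp i hi]

lemma isPos_apply {f : V →ₗ[ℝ] V} (hv : C.IsPos v) (hf : ∀ i, C.IsPos (f (C.π i))) :
    C.IsPos (f v) :=
  isPos_apply_of_support (J := Set.univ) hv (by simp) fun i _ => hf i

end Coordinates

section Words

variable (C)

@[simp] lemma wordProd_nil : C.wordProd [] = 1 := rfl

lemma wordProd_cons (i : Fin C.r) (l : List (Fin C.r)) :
    C.wordProd (i :: l) = C.s (C.π i) * C.wordProd l := by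
  simp [wordProd]

lemma wordProd_append (l₁ l₂ : List (Fin C.r)) :
    C.wordProd (l₁ ++ l₂) = C.wordProd l₁ * C.wordProd l₂ := by
  simp [wordProd]

lemma wordProd_concat (l : List (Fin C.r)) (i : Fin C.r) :
    C.wordProd (l ++ [i]) = C.wordProd l * C.s (C.π i) := by
  simp [wordProd]

lemma wordProd_reverse (l : List (Fin C.r)) : C.wordProd l.reverse = (C.wordProd l)⁻¹ := by
  induction l with
  | nil => simp
  | cons i t ih =>
    rw [List.reverse_cons, C.wordProd_concat, ih, C.wordProd_cons, mul_inv_rev,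
      C.s_inv (C.simple_mem i)]

lemma s_simple_mem_parabolic {J : Set (Fin C.r)} {i : Fin C.r} (hi : i ∈ J) :
    C.s (C.π i) ∈ C.parabolicSubgroup J :=
  Subgroup.subset_closure ⟨i, hi, rfl⟩

lemma wordProd_mem_parabolic {J : Set (Fin C.r)} {l : List (Fin C.r)} (hl : ∀ k ∈ l, k ∈ J) :
    C.wordProd l ∈ C.parabolicSubgroup J := by
  induction l with
  | nil => exact one_mem _
  | cons i t ih =>
    rw [C.wordProd_cons]
    exact mul_mem (C.s_simple_mem_parabolic (hl i (by simp)))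
      (ih fun k hk => hl k (List.mem_cons_of_mem i hk))

lemma wordProd_mem_W (l : List (Fin C.r)) : C.wordProd l ∈ C.W :=
  C.parabolic_le Set.univ (C.wordProd_mem_parabolic fun _ _ => trivial)

variable {C}

lemma s_simple_apply_isPos {i : Fin C.r} {β : V} (hβ : β ∈ C.Φ) (hpos : C.IsPos β)
    (hne : β ≠ C.π i) : C.IsPos (C.s (C.π i) β) := by
  rw [isPos_iff] at hpos
  obtain ⟨k, hki, hk⟩ : ∃ k, k ≠ i ∧ 0 < C.coord k β := by
    by_contra! h
    have hβi : β = C.coord i β • C.π i := by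
      conv_lhs => rw [← C.sum_coord_smul β]
      refine Finset.sum_eq_single i (fun k _ hk => ?_) (by simp)
      rw [le_antisymm (h k hk) (hpos k), zero_smul]
    rcases C.reduced _ (C.simple_mem i) _ (hβi ▸ hβ) with h1 | h1
    · exact hne (by rw [hβi, h1, one_smul])
    · linarith [hpos i]
  refine isPos_of_not_isNeg (C.refl_stable _ (C.simple_mem i) _ hβ) fun hneg => ?_
  have := isNeg_iff.1 hneg k
  rw [C.s_apply_pairing (C.simple_mem i), map_sub, map_smul, C.coord_simple, if_neg hki.symm]
    at this
  simp only [smul_eq_mul, mul_zero, sub_zero] at this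
  linarith

/-- Induction on the height `∑ k, coord k α`, which `s_i` lowers whenever `(α, α_i) > 0`;
such an `i` exists since `(α, α) > 0`. -/
lemma exists_wordProd_apply_simple_eq {α : V} (hα : α ∈ C.Φ) (hpos : C.IsPos α) :
    ∃ l i, C.wordProd l (C.π i) = α := by
  by_contra! hα'
  set T := C.Φ.filter fun β => C.IsPos β ∧ ∀ l i, C.wordProd l (C.π i) ≠ β
  obtain ⟨β, hβT, hmin⟩ :=
    T.exists_min_image (fun β => ∑ k, C.coord k β) ⟨α, by simp [T, hα, hpos, hα']⟩
  simp only [T, Finset.mem_filter] at hβT hmin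
  obtain ⟨hβ, hβpos, hβword⟩ := hβT
  obtain ⟨i, -, hi⟩ : ∃ i ∈ Finset.univ, (0 : ℝ) < C.coord i β * ⟪β, C.π i⟫_ℝ := by
    refine Finset.exists_lt_of_sum_lt ?_
    rw [Finset.sum_const_zero, ← C.inner_eq_sum_coord]
    exact C.inner_self_pos hβ
  have hpair : 0 < pairing β (C.π i) :=
    div_pos (by linarith [pos_of_mul_pos_right hi (isPos_iff.1 hβpos i)])
      (C.inner_self_pos (C.simple_mem i))
  have hsβ := C.refl_stable _ (C.simple_mem i) _ hβ
  have hheight : ∑ k, C.coord k (C.s (C.π i) β) < ∑ k, C.coord k β := by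
    simp [C.s_apply_pairing (C.simple_mem i), Finset.sum_sub_distrib, C.coord_simple, hpair]
  obtain ⟨l, k, hlk⟩ : ∃ l k, C.wordProd l (C.π k) = C.s (C.π i) β := by
    by_contra! h
    have := hmin _ ⟨hsβ, s_simple_apply_isPos hβ hβpos fun h => hβword [] i (by simp [h]), h⟩
    linarith
  exact hβword (i :: l) k (by rw [C.wordProd_cons, LinearEquiv.mul_apply, hlk,
    C.s_s (C.simple_mem i)])

lemma exists_wordProd_eq_s {α : V} (hα : α ∈ C.Φ) : ∃ l, C.wordProd l = C.s α := by
  wlog hpos : C.IsPos α generalizing α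
  · obtain ⟨l, hl⟩ := this (C.neg_mem_Φ hα) (isNeg_of_not_isPos hα hpos)
    exact ⟨l, hl.trans (C.s_neg hα)⟩
  obtain ⟨l, i, rfl⟩ := exists_wordProd_apply_simple_eq hα hpos
  refine ⟨l ++ i :: l.reverse, ?_⟩
  rw [← C.conj_s (C.wordProd_mem_W l) (C.simple_mem i), ← C.wordProd_reverse,
    ← C.wordProd_concat, ← C.wordProd_append]
  simp

variable (C)

lemma parabolicSubgroup_univ : C.parabolicSubgroup Set.univ = C.W := by
  refine le_antisymm (C.parabolic_le _) ?_
  rw [C.W_eq, Subgroup.closure_le]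
  rintro _ ⟨α, hα, rfl⟩
  obtain ⟨l, hl⟩ := exists_wordProd_eq_s hα
  exact hl ▸ C.wordProd_mem_parabolic fun _ _ => trivial

end Words

section Length

variable {g : V ≃ₗ[ℝ] V} {i : Fin C.r}

lemma exists_wordProd_eq (hg : g ∈ C.W) : ∃ l, C.wordProd l = g := by
  rw [← C.parabolicSubgroup_univ] at hg
  induction hg using Subgroup.closure_induction with
  | mem x hx =>
    obtain ⟨i, -, rfl⟩ := hx
    exact ⟨[i], by simp [wordProd]⟩
  | one => exact ⟨[], rfl⟩
  | mul x y _ _ hx hy =>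
    obtain ⟨l₁, rfl⟩ := hx
    obtain ⟨l₂, rfl⟩ := hy
    exact ⟨l₁ ++ l₂, C.wordProd_append l₁ l₂⟩
  | inv x _ hx =>
    obtain ⟨l, rfl⟩ := hx
    exact ⟨l.reverse, C.wordProd_reverse l⟩

lemma length_le_of_wordProd_eq {l : List (Fin C.r)} (h : C.wordProd l = g) :
    C.length g ≤ l.length :=
  Nat.sInf_le ⟨l, rfl, h⟩

lemma exists_reduced_word (hg : g ∈ C.W) :
    ∃ l, l.length = C.length g ∧ C.wordProd l = g := by
  obtain ⟨l, hl⟩ := exists_wordProd_eq hg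
  exact Nat.sInf_mem (s := {n | ∃ l, l.length = n ∧ C.wordProd l = g}) ⟨l.length, l, rfl, hl⟩

lemma eq_one_of_length_eq_zero (hg : g ∈ C.W) (h : C.length g = 0) : g = 1 := by
  obtain ⟨l, hl, rfl⟩ := exists_reduced_word hg
  rw [h, List.length_eq_zero_iff] at hl
  rw [hl, C.wordProd_nil]

lemma eq_simple_of_isNeg_s_apply {β : V} (hβ : β ∈ C.Φ) (hpos : C.IsPos β)
    (h : C.IsNeg (C.s (C.π i) β)) : β = C.π i := by
  by_contra hne
  exact not_isNeg (C.refl_stable _ (C.simple_mem i) _ hβ) (s_simple_apply_isPos hβ hpos hne) h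

/-- The exchange condition. Once `β = wordProd t α_i` is positive while `s_m β` is negative,
`β = α_m`, and the letter `m` cancels against `s_i`. -/
lemma exists_shorter_word_of_isNeg (l : List (Fin C.r))
    (h : C.IsNeg (C.wordProd l (C.π i))) :
    ∃ l', l'.length + 1 = l.length ∧ C.wordProd l' = C.wordProd l * C.s (C.π i) := by
  induction l with
  | nil => exact absurd h (not_isNeg (C.simple_mem i) (isPos_simple i))
  | cons m t ih =>
    by_cases ht : C.IsNeg (C.wordProd t (C.π i))
    · obtain ⟨t', ht', hw⟩ := ih ht
      exact ⟨m :: t', by simp [ht'], by rw [C.wordProd_cons, C.wordProd_cons, hw, mul_assoc]⟩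
    · have hroot := C.apply_mem_Φ (C.wordProd_mem_W t) (C.simple_mem i)
      have heq : C.wordProd t (C.π i) = C.π m :=
        eq_simple_of_isNeg_s_apply hroot (isPos_of_not_isNeg hroot ht)
          (by rwa [C.wordProd_cons] at h)
      have hconj : C.wordProd t * C.s (C.π i) * (C.wordProd t)⁻¹ = C.s (C.π m) := by
        rw [C.conj_s (C.wordProd_mem_W t) (C.simple_mem i), heq]
      refine ⟨t, by simp, ?_⟩
      rw [C.wordProd_cons, ← hconj, inv_mul_cancel_right, mul_assoc,
        C.s_mul_self (C.simple_mem i), mul_one]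

lemma length_mul_s_lt_of_isNeg (hg : g ∈ C.W) (h : C.IsNeg (g (C.π i))) :
    C.length (g * C.s (C.π i)) < C.length g := by
  obtain ⟨l, hl, rfl⟩ := exists_reduced_word hg
  obtain ⟨l', hl', hw⟩ := exists_shorter_word_of_isNeg l h
  have := length_le_of_wordProd_eq hw
  omega

lemma length_lt_length_mul_s_of_isPos (hg : g ∈ C.W) (h : C.IsPos (g (C.π i))) :
    C.length g < C.length (g * C.s (C.π i)) := by
  have hneg : C.IsNeg ((g * C.s (C.π i)) (C.π i)) := by
    rwa [LinearEquiv.mul_apply, C.s_self (C.simple_mem i), map_neg, isNeg_neg_iff]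
  simpa [mul_assoc, C.s_mul_self (C.simple_mem i)] using
    length_mul_s_lt_of_isNeg (mul_mem hg (C.s_mem_W (C.simple_mem i))) hneg

lemma isPos_of_length_le_length_mul_s (hg : g ∈ C.W)
    (h : C.length g ≤ C.length (g * C.s (C.π i))) : C.IsPos (g (C.π i)) :=
  isPos_of_not_isNeg (C.apply_mem_Φ hg (C.simple_mem i)) fun hneg =>
    (length_mul_s_lt_of_isNeg hg hneg).not_ge h

lemma length_mul_s_le (hg : g ∈ C.W) : C.length (g * C.s (C.π i)) ≤ C.length g + 1 := by
  obtain ⟨l, hl, rfl⟩ := exists_reduced_word hg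
  simpa [hl] using length_le_of_wordProd_eq (C.wordProd_concat l i)

lemma exists_isNeg_apply_simple (hg : g ∈ C.W) (h1 : g ≠ 1) : ∃ i, C.IsNeg (g (C.π i)) := by
  obtain ⟨l, hl, rfl⟩ := exists_reduced_word hg
  obtain ⟨t, i, rfl⟩ := (List.eq_nil_or_concat l).resolve_left (by rintro rfl; exact h1 rfl)
  rw [List.concat_eq_append] at hl hg ⊢
  refine ⟨i, isNeg_of_not_isPos (C.apply_mem_Φ hg (C.simple_mem i)) fun hpos => ?_⟩
  have hlt := length_lt_length_mul_s_of_isPos hg hpos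
  have hle : C.length (C.wordProd (t ++ [i]) * C.s (C.π i)) ≤ t.length :=
    length_le_of_wordProd_eq <| by
      rw [C.wordProd_concat, mul_assoc, C.s_mul_self (C.simple_mem i), mul_one]
  simp only [List.length_append, List.length_singleton] at hl
  omega

end Length

section Parabolic

variable {J : Set (Fin C.r)} {g : V ≃ₗ[ℝ] V} {i : Fin C.r}

lemma coord_apply_of_mem_parabolic (hg : g ∈ C.parabolicSubgroup J) (hi : i ∉ J) (v : V) :
    C.coord i (g v) = C.coord i v := by
  induction hg using Subgroup.closure_induction generalizing v with
  | mem x hx =>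
    obtain ⟨k, hk, rfl⟩ := hx
    rw [C.s_apply_pairing (C.simple_mem k), map_sub, map_smul, C.coord_simple,
      if_neg (ne_of_mem_of_not_mem hk hi)]
    simp
  | one => rfl
  | mul x y _ _ hx hy => rw [LinearEquiv.mul_apply, hx, hy]
  | inv x _ hx => rw [← hx (x⁻¹ v)]; simp

lemma mem_of_isNeg_apply_simple (hg : g ∈ C.parabolicSubgroup J)
    (h : C.IsNeg (g (C.π i))) : i ∈ J := by
  by_contra hi
  have := isNeg_iff.1 h i
  rw [coord_apply_of_mem_parabolic hg hi, C.coord_simple, if_pos rfl] at this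
  norm_num at this

theorem parabolic_induction {P : (V ≃ₗ[ℝ] V) → Prop} (one : P 1)
    (mul_s : ∀ y ∈ C.parabolicSubgroup J, ∀ i ∈ J, C.IsPos (y (C.π i)) →
      P y → P (y * C.s (C.π i)))
    (hg : g ∈ C.parabolicSubgroup J) : P g := by
  induction hn : C.length g using Nat.strong_induction_on generalizing g with
  | _ n ih =>
    have hgW := C.parabolic_le J hg
    by_cases h1 : g = 1
    · exact h1 ▸ one
    obtain ⟨i, hi⟩ := exists_isNeg_apply_simple hgW h1
    have hiJ := mem_of_isNeg_apply_simple hg hi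
    have hy : g * C.s (C.π i) ∈ C.parabolicSubgroup J :=
      mul_mem hg (C.s_simple_mem_parabolic hiJ)
    have hpos : C.IsPos ((g * C.s (C.π i)) (C.π i)) := by
      rwa [LinearEquiv.mul_apply, C.s_self (C.simple_mem i), map_neg, ← isNeg_neg_iff, neg_neg]
    simpa [mul_assoc, C.s_mul_self (C.simple_mem i)] using
      mul_s _ hy i hiJ hpos (ih _ (hn ▸ length_mul_s_lt_of_isNeg hgW hi) hy rfl)

theorem W_induction {P : (V ≃ₗ[ℝ] V) → Prop} (one : P 1)
    (mul_s : ∀ y ∈ C.W, ∀ i, C.IsPos (y (C.π i)) → P y → P (y * C.s (C.π i)))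
    (hg : g ∈ C.W) : P g := by
  rw [← C.parabolicSubgroup_univ] at hg mul_s
  exact parabolic_induction one (fun y hy i _ => mul_s y hy i) hg

lemma bruhatLE_mul_of_mem_parabolic {J : Set (Fin C.r)} {w u : V ≃ₗ[ℝ] V} (hw : w ∈ C.W)
    (hJ : ∀ i ∈ J, C.IsPos (w (C.π i))) (hu : u ∈ C.parabolicSubgroup J) :
    C.BruhatLE w (w * u) := by
  refine parabolic_induction (P := fun u => C.BruhatLE w (w * u)) (by simpa using .refl) ?_ hu
  intro y hy k hk hpos ih
  refine ih.tail ⟨⟨C.π k, C.simple_mem k, by rw [mul_assoc]⟩, ?_⟩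
  refine length_lt_length_mul_s_of_isPos (mul_mem hw (C.parabolic_le J hy)) ?_
  have hsupp : ∀ m ∉ J, C.coord m (y (C.π k)) = 0 := fun m hm => by
    rw [coord_apply_of_mem_parabolic hy hm, C.coord_simple, if_neg (ne_of_mem_of_not_mem hk hm)]
  simpa using isPos_apply_of_support (f := w.toLinearMap) hpos hsupp hJ

end Parabolic

section Inversions

variable (C) in
def posRoots : Finset V := C.Φ.filter C.IsPos

variable (C) in
def inversions (g : V ≃ₗ[ℝ] V) : Finset V := C.posRoots.filter fun α => C.IsNeg (g α)

variable {g : V ≃ₗ[ℝ] V} {α : V} {i : Fin C.r}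

lemma mem_posRoots : α ∈ C.posRoots ↔ α ∈ C.Φ ∧ C.IsPos α := Finset.mem_filter

lemma mem_inversions : α ∈ C.inversions g ↔ α ∈ C.Φ ∧ C.IsPos α ∧ C.IsNeg (g α) := by
  rw [inversions, Finset.mem_filter, mem_posRoots, and_assoc]

lemma inversions_subset_posRoots : C.inversions g ⊆ C.posRoots := Finset.filter_subset _ _

lemma simple_mem_inversions_mul_s_iff :
    C.π i ∈ C.inversions (g * C.s (C.π i)) ↔ C.IsPos (g (C.π i)) := by
  rw [mem_inversions, LinearEquiv.mul_apply, C.s_self (C.simple_mem i), map_neg, isNeg_neg_iff]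
  exact ⟨fun h => h.2.2, fun h => ⟨C.simple_mem i, isPos_simple i, h⟩⟩

lemma s_simple_apply_mem_inversions_erase
    (hα : α ∈ (C.inversions (g * C.s (C.π i))).erase (C.π i)) :
    C.s (C.π i) α ∈ (C.inversions g).erase (C.π i) := by
  obtain ⟨hne, hinv⟩ := Finset.mem_erase.1 hα
  obtain ⟨hΦ, hpos, hneg⟩ := mem_inversions.1 hinv
  refine Finset.mem_erase.2 ⟨fun h => ?_, mem_inversions.2 ⟨C.refl_stable _ (C.simple_mem i) _ hΦ,
    s_simple_apply_isPos hΦ hpos hne, hneg⟩⟩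
  have := congrArg (C.s (C.π i)) h
  rw [C.s_s (C.simple_mem i), C.s_self (C.simple_mem i)] at this
  exact not_isNeg hΦ hpos (this ▸ isNeg_neg_iff.2 (isPos_simple i))

/-- `s_i` permutes the positive roots other than `α_i`. -/
lemma card_inversions_mul_s_erase :
    ((C.inversions (g * C.s (C.π i))).erase (C.π i)).card =
      ((C.inversions g).erase (C.π i)).card := by
  refine Finset.card_nbij' (C.s (C.π i)) (C.s (C.π i)) (fun α hα => ?_) (fun α hα => ?_)
    (fun α _ => C.s_s (C.simple_mem i) α) (fun α _ => C.s_s (C.simple_mem i) α)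
  · exact s_simple_apply_mem_inversions_erase hα
  · refine s_simple_apply_mem_inversions_erase (g := g * C.s (C.π i)) ?_
    rwa [mul_assoc, C.s_mul_self (C.simple_mem i), mul_one]

lemma card_inversions_mul_s_of_isPos (h : C.IsPos (g (C.π i))) :
    (C.inversions (g * C.s (C.π i))).card = (C.inversions g).card + 1 := by
  have hnot : C.π i ∉ C.inversions g := fun hi => C.root_ne_zero _ (C.simple_mem i) <|
    g.map_eq_zero_iff.1 (eq_zero_of_isPos_of_isNeg h (mem_inversions.1 hi).2.2)
  rw [← Finset.card_erase_add_one (simple_mem_inversions_mul_s_iff.2 h),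
    card_inversions_mul_s_erase, Finset.erase_eq_of_notMem hnot]

lemma card_inversions_mul_s_le :
    (C.inversions (g * C.s (C.π i))).card ≤ (C.inversions g).card + 1 := by
  have h₁ := Finset.pred_card_le_card_erase (s := C.inversions (g * C.s (C.π i))) (a := C.π i)
  have h₂ := Finset.card_erase_le (s := C.inversions g) (a := C.π i)
  rw [card_inversions_mul_s_erase] at h₁
  omega

lemma card_inversions_wordProd_le (l : List (Fin C.r)) :
    (C.inversions (C.wordProd l)).card ≤ l.length := by
  induction l using List.reverseRecOn with
  | nil =>
    refine (Finset.card_eq_zero.2 (Finset.eq_empty_of_forall_notMem fun α hα => ?_)).le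
    obtain ⟨hΦ, hpos, hneg⟩ := mem_inversions.1 hα
    exact not_isNeg hΦ hpos hneg
  | append_singleton t i ih =>
    rw [C.wordProd_concat, List.length_append, List.length_singleton]
    exact card_inversions_mul_s_le.trans (by omega)

lemma length_eq_card_inversions (hg : g ∈ C.W) : C.length g = (C.inversions g).card := by
  refine le_antisymm ?_ ?_
  · refine W_induction (P := fun g => C.length g ≤ (C.inversions g).card)
      (length_le_of_wordProd_eq (l := []) rfl |>.trans (Nat.zero_le _)) ?_ hg
    intro y hy i hpos ih
    rw [card_inversions_mul_s_of_isPos hpos]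
    exact (length_mul_s_le hy).trans (by omega)
  · obtain ⟨l, hl, rfl⟩ := exists_reduced_word hg
    exact hl ▸ card_inversions_wordProd_le l

end Inversions

section Dominant

variable {a b x : V} {g : V ≃ₗ[ℝ] V}

lemma pairing_eq_zero_iff {α : V} (hα : α ∈ C.Φ) (v : V) : pairing v α = 0 ↔ ⟪v, α⟫_ℝ = 0 := by
  simp [pairing, C.root_ne_zero α hα]

lemma IsDominant.inner_simple_nonneg (ha : C.IsDominant a) (i : Fin C.r) :
    0 ≤ ⟪a, C.π i⟫_ℝ := by
  have h := ha i
  rw [pairing, div_nonneg_iff] at h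
  rcases h with ⟨h, -⟩ | ⟨-, h⟩
  · linarith
  · linarith [C.inner_self_pos (C.simple_mem i)]

lemma IsDominant.inner_nonneg (ha : C.IsDominant a) (hx : C.IsPos x) : 0 ≤ ⟪a, x⟫_ℝ := by
  rw [C.inner_eq_sum_coord]
  exact Finset.sum_nonneg fun i _ => mul_nonneg (isPos_iff.1 hx i) (ha.inner_simple_nonneg i)

lemma IsDominant.pairing_nonneg (ha : C.IsDominant a) (hx : C.IsPos x) : 0 ≤ pairing a x :=
  div_nonneg (by linarith [ha.inner_nonneg hx]) real_inner_self_nonneg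

lemma IsDominant.isPos_sub_apply (hb : C.IsDominant b) (hg : g ∈ C.W) : C.IsPos (b - g b) := by
  refine W_induction (P := fun g => C.IsPos (b - g b)) (isPos_iff.2 fun i => by simp) ?_ hg
  intro y _ i hpos ih
  have : b - (y * C.s (C.π i)) b = (b - y b) + pairing b (C.π i) • y (C.π i) := by
    rw [LinearEquiv.mul_apply, C.s_apply_pairing (C.simple_mem i), map_sub, map_smul]
    abel
  rw [this, isPos_iff]
  intro m
  rw [map_add, map_smul, smul_eq_mul]
  exact add_nonneg (isPos_iff.1 ih m) (mul_nonneg (hb i) (isPos_iff.1 hpos m))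

lemma apply_eq_self_of_mem_parabolic {J : Set (Fin C.r)} (hv : ∀ i ∈ J, pairing x (C.π i) = 0)
    (hg : g ∈ C.parabolicSubgroup J) : g x = x := by
  suffices C.parabolicSubgroup J ≤ MulAction.stabilizer (V ≃ₗ[ℝ] V) x from this hg
  refine (Subgroup.closure_le _).2 ?_
  rintro _ ⟨i, hi, rfl⟩
  rw [SetLike.mem_coe, MulAction.mem_stabilizer_iff, LinearEquiv.smul_def,
    C.s_apply_pairing (C.simple_mem i), hv i hi, zero_smul, sub_zero]

lemma exists_mem_parabolic_apply_eq {J : Set (Fin C.r)} (hb : C.IsDominant b) (hg : g ∈ C.W)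
    (hsupp : ∀ i ∉ J, C.coord i (b - g b) = 0) : ∃ u ∈ C.parabolicSubgroup J, u b = g b := by
  -- Induct on `g⁻¹`, so that each step applies a simple reflection on the left.
  suffices key : ∀ g ∈ C.W, (∀ i ∉ J, C.coord i (b - g⁻¹ b) = 0) →
      ∃ u ∈ C.parabolicSubgroup J, u b = g⁻¹ b by
    simpa using key g⁻¹ (inv_mem hg) (by simpa using hsupp)
  intro g hg
  refine W_induction (P := fun g => (∀ i ∉ J, C.coord i (b - g⁻¹ b) = 0) →
    ∃ u ∈ C.parabolicSubgroup J, u b = g⁻¹ b) (fun _ => ⟨1, one_mem _, by simp⟩) ?_ hg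
  intro y hy i hpos ih hsupp
  set c := y⁻¹ b
  set q := pairing c (C.π i)
  have hq : 0 ≤ q := by
    have h := hb.pairing_nonneg hpos
    rwa [← LinearEquiv.apply_symm_apply y b, C.pairing_apply_apply hy] at h
  have hsc : (y * C.s (C.π i))⁻¹ b = c - q • C.π i := by
    rw [mul_inv_rev, C.s_inv (C.simple_mem i), LinearEquiv.mul_apply,
      C.s_apply_pairing (C.simple_mem i)]
  have hcoord : ∀ m, C.coord m (b - (y * C.s (C.π i))⁻¹ b) =
      C.coord m (b - c) + q * if i = m then 1 else 0 := fun m => by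
    rw [hsc, sub_sub_eq_add_sub, add_sub_right_comm, map_add, map_smul, C.coord_simple,
      smul_eq_mul]
  by_cases hi : i ∈ J
  · obtain ⟨u, hu, hub⟩ := ih fun m hm => by
      simpa [ne_of_mem_of_not_mem hi hm] using (hcoord m).symm.trans (hsupp m hm)
    refine ⟨C.s (C.π i) * u, mul_mem (C.s_simple_mem_parabolic hi) hu, ?_⟩
    rw [LinearEquiv.mul_apply, hub, hsc, C.s_apply_pairing (C.simple_mem i)]
  · -- The `i`-th coordinate `coord i (b - c) + q` vanishes and both terms are nonnegative.
    have hci := isPos_iff.1 (hb.isPos_sub_apply (inv_mem hy)) i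
    have hq0 : q = 0 := by
      have := hsupp i hi
      rw [hcoord, if_pos rfl] at this
      linarith
    rw [hsc, hq0, zero_smul, sub_zero]
    exact ih fun m hm => by simpa [hq0] using (hcoord m).symm.trans (hsupp m hm)

lemma inner_self_add_sub_inner_self_add_apply (hg : g ∈ C.W) (a b : V) :
    ⟪a + b, a + b⟫_ℝ - ⟪a + g b, a + g b⟫_ℝ = 2 * ⟪a, b - g b⟫_ℝ := by
  rw [real_inner_add_add_self, real_inner_add_add_self, C.inner_invariant g hg, inner_sub_right]
  ring

lemma inner_self_add_apply_le (ha : C.IsDominant a) (hb : C.IsDominant b) (hg : g ∈ C.W) :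
    ⟪a + g b, a + g b⟫_ℝ ≤ ⟪a + b, a + b⟫_ℝ := by
  have := inner_self_add_sub_inner_self_add_apply hg a b
  linarith [ha.inner_nonneg (hb.isPos_sub_apply hg)]

lemma exists_mem_parabolic_of_inner_self_add_apply_eq (ha : C.IsDominant a)
    (hb : C.IsDominant b) (hg : g ∈ C.W) (h : ⟪a + g b, a + g b⟫_ℝ = ⟪a + b, a + b⟫_ℝ) :
    ∃ u ∈ C.parabolicSubgroup {i | pairing a (C.π i) = 0}, u (a + b) = a + g b := by
  have hzero : ∑ i, C.coord i (b - g b) * ⟪a, C.π i⟫_ℝ = 0 := by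
    have := inner_self_add_sub_inner_self_add_apply hg a b
    rw [← C.inner_eq_sum_coord]
    linarith
  rw [Finset.sum_eq_zero_iff_of_nonneg fun i _ => mul_nonneg
    (isPos_iff.1 (hb.isPos_sub_apply hg) i) (ha.inner_simple_nonneg i)] at hzero
  obtain ⟨u, hu, hub⟩ := exists_mem_parabolic_apply_eq hb hg fun i hi =>
    (mul_eq_zero.1 (hzero i (Finset.mem_univ i))).resolve_right
      (mt (pairing_eq_zero_iff (C.simple_mem i) a).2 hi)
  exact ⟨u, hu, by rw [map_add, hub, apply_eq_self_of_mem_parabolic (fun i hi => hi) hu]⟩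

end Dominant

section Longest

variable (C) in
lemma exists_forall_isNeg_apply_simple : ∃ w₀ ∈ C.W, ∀ i, C.IsNeg (w₀ (C.π i)) := by
  by_contra! h
  have hgrow : ∀ n, ∃ g ∈ C.W, n ≤ (C.inversions g).card := by
    intro n
    induction n with
    | zero => exact ⟨1, one_mem _, Nat.zero_le _⟩
    | succ n ih =>
      obtain ⟨g, hg, hn⟩ := ih
      obtain ⟨i, hi⟩ := h g hg
      refine ⟨g * C.s (C.π i), mul_mem hg (C.s_mem_W (C.simple_mem i)), ?_⟩
      have hpos := isPos_of_not_isNeg (C.apply_mem_Φ hg (C.simple_mem i)) hi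
      rw [card_inversions_mul_s_of_isPos hpos]
      omega
  obtain ⟨g, -, hg⟩ := hgrow (C.posRoots.card + 1)
  have := Finset.card_le_card (inversions_subset_posRoots (C := C) (g := g))
  omega

variable {w₀ : V ≃ₗ[ℝ] V} (hw₀ : w₀ ∈ C.W) (hneg : ∀ i, C.IsNeg (w₀ (C.π i)))
include hneg

lemma isNeg_apply_of_forall_isNeg {v : V} (hv : C.IsPos v) : C.IsNeg (w₀ v) :=
  isPos_apply (f := -w₀.toLinearMap) hv fun i => hneg i

include hw₀

lemma mul_self_eq_one_of_forall_isNeg : w₀ * w₀ = 1 := by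
  have hW := mul_mem hw₀ hw₀
  refine eq_one_of_length_eq_zero hW ?_
  rw [length_eq_card_inversions hW, Finset.card_eq_zero]
  refine Finset.eq_empty_of_forall_notMem fun α hα => ?_
  obtain ⟨hΦ, hpos, hneg'⟩ := mem_inversions.1 hα
  have h := isNeg_apply_of_forall_isNeg hneg
    (isPos_neg_iff.2 (isNeg_apply_of_forall_isNeg hneg hpos))
  rw [map_neg, isNeg_neg_iff] at h
  exact not_isNeg (C.apply_mem_Φ hW hΦ) h hneg'

/-- `α ↦ -w₀ α` matches the inversions of `g * w₀` with the positive roots that are not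
inversions of `g`. -/
lemma card_inversions_mul_add_card_inversions {g : V ≃ₗ[ℝ] V} (hg : g ∈ C.W) :
    (C.inversions (g * w₀)).card + (C.inversions g).card = C.posRoots.card := by
  have hinv : ∀ α, w₀ (w₀ α) = α := fun α => by
    rw [← LinearEquiv.mul_apply, mul_self_eq_one_of_forall_isNeg hw₀ hneg]; rfl
  have hbij : (C.inversions (g * w₀)).card = (C.posRoots \ C.inversions g).card := by
    refine Finset.card_nbij' (fun α => -w₀ α) (fun α => -w₀ α) (fun α hα => ?_)
      (fun α hα => ?_) (fun α _ => by simp [hinv]) (fun α _ => by simp [hinv])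
    · obtain ⟨hΦ, hpos, hgneg⟩ := mem_inversions.1 hα
      have hΦ' := C.neg_mem_Φ (C.apply_mem_Φ hw₀ hΦ)
      refine Finset.mem_sdiff.2 ⟨mem_posRoots.2 ⟨hΦ',
        isPos_neg_iff.2 (isNeg_apply_of_forall_isNeg hneg hpos)⟩, fun h => ?_⟩
      have h' := (mem_inversions.1 h).2.2
      rw [map_neg, isNeg_neg_iff] at h'
      exact not_isNeg (C.apply_mem_Φ hg (C.apply_mem_Φ hw₀ hΦ)) h' hgneg
    · obtain ⟨hpos, hnot⟩ := Finset.mem_sdiff.1 hα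
      obtain ⟨hΦ, hpos⟩ := mem_posRoots.1 hpos
      have hgpos : C.IsPos (g α) := isPos_of_not_isNeg (C.apply_mem_Φ hg hΦ) fun h =>
        hnot (mem_inversions.2 ⟨hΦ, hpos, h⟩)
      refine mem_inversions.2 ⟨C.neg_mem_Φ (C.apply_mem_Φ hw₀ hΦ),
        isPos_neg_iff.2 (isNeg_apply_of_forall_isNeg hneg hpos), ?_⟩
      rwa [LinearEquiv.mul_apply, map_neg, hinv, map_neg, isNeg_neg_iff]
  rw [hbij, Finset.card_sdiff_of_subset inversions_subset_posRoots,
    Nat.sub_add_cancel (Finset.card_le_card inversions_subset_posRoots)]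

lemma length_mul_add_length {g : V ≃ₗ[ℝ] V} (hg : g ∈ C.W) :
    C.length (g * w₀) + C.length g = C.posRoots.card := by
  rw [length_eq_card_inversions (mul_mem hg hw₀), length_eq_card_inversions hg,
    card_inversions_mul_add_card_inversions hw₀ hneg hg]

omit hneg hw₀ in
lemma BruhatLE.mem_W {x y : V ≃ₗ[ℝ] V} (h : C.BruhatLE x y) (hx : x ∈ C.W) : y ∈ C.W := by
  induction h with
  | refl => exact hx
  | tail _ hstep ih =>
    obtain ⟨⟨α, hα, rfl⟩, -⟩ := hstep
    exact mul_mem ih (C.s_mem_W hα)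

/-- A step `b < b s_α` becomes `b s_α w₀ < b w₀ = (b s_α w₀) s_{w₀⁻¹ α}`,
since `ℓ(g w₀) = |Φ⁺| - ℓ(g)`. -/
lemma bruhatLE_mul_of_forall_isNeg {x y : V ≃ₗ[ℝ] V} (hx : x ∈ C.W) (h : C.BruhatLE x y) :
    C.BruhatLE (y * w₀) (x * w₀) := by
  induction h with
  | refl => exact .refl
  | @tail b c hxb hbc ih =>
    have hb := BruhatLE.mem_W hxb hx
    obtain ⟨⟨α, hα, rfl⟩, hlen⟩ := hbc
    refine .head ⟨⟨w₀⁻¹ α, C.apply_mem_Φ (inv_mem hw₀) hα, ?_⟩, ?_⟩ ih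
    · rw [← C.conj_s (inv_mem hw₀) hα, inv_inv]
      calc b * w₀ = b * C.s α * C.s α * w₀ := by rw [mul_assoc b, C.s_mul_self hα, mul_one]
        _ = b * C.s α * w₀ * (w₀⁻¹ * C.s α * w₀) := by group
    · have h₁ := length_mul_add_length hw₀ hneg hb
      have h₂ := length_mul_add_length hw₀ hneg (mul_mem hb (C.s_mem_W hα))
      omega

end Longest

section Weights

variable {ϖ : V} {w : V ≃ₗ[ℝ] V}

lemma isDominant_fund (j : Fin C.r) : C.IsDominant (C.ω j) := fun i => by
  rw [show pairing (C.ω j) (C.π i) = _ from C.fund j i]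
  split_ifs <;> norm_num

lemma IsDominant.sub_fund (hdom : C.IsDominant ϖ) {j : Fin C.r} (hj : 1 ≤ pairing ϖ (C.π j)) :
    C.IsDominant (ϖ - C.ω j) := fun i => by
  rw [pairing_sub_left, show pairing (C.ω j) (C.π i) = _ from C.fund j i]
  split_ifs with h
  · subst h
    linarith
  · simpa using hdom i

lemma isPos_apply_simple_of_length_le (hw : w ∈ C.W)
    (hmin : ∀ u ∈ C.W, u ϖ = w ϖ → C.length w ≤ C.length u) {i : Fin C.r}
    (hi : pairing ϖ (C.π i) = 0) : C.IsPos (w (C.π i)) := by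
  refine isPos_of_length_le_length_mul_s hw (hmin _ (mul_mem hw (C.s_mem_W (C.simple_mem i))) ?_)
  rw [LinearEquiv.mul_apply, C.s_apply_pairing (C.simple_mem i), hi, zero_smul, sub_zero]

lemma isPos_apply_simple_of_pairing_sub_fund_eq_zero (hw : w ∈ C.W)
    (hmin : ∀ u ∈ C.W, u ϖ = w ϖ → C.length w ≤ C.length u) {j : Fin C.r}
    (hj : C.length w < C.length (w * C.s (C.π j))) {i : Fin C.r}
    (hi : pairing (ϖ - C.ω j) (C.π i) = 0) : C.IsPos (w (C.π i)) := by
  by_cases hij : i = j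
  · exact hij ▸ isPos_of_length_le_length_mul_s hw hj.le
  · refine isPos_apply_simple_of_length_le hw hmin ?_
    rwa [pairing_sub_left, show pairing (C.ω j) (C.π i) = _ from C.fund j i,
      if_neg (Ne.symm hij), sub_zero] at hi

lemma antiLE_of_inner_self_lt {μ lam : V} (h : ⟪μ, μ⟫_ℝ < ⟪lam, lam⟫_ℝ) : C.AntiLE μ lam :=
  Or.inl (by simpa using h)

/-- `-ϖ` lies in the orbit of the dominant weight `w₀⁻¹ (-ϖ)`. -/
lemma antiLE_apply_of_bruhatLE (hX : ϖ ∈ C.X) (hdom : C.IsDominant ϖ) {v : V ≃ₗ[ℝ] V}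
    (hw : w ∈ C.W) (h : C.BruhatLE w v) : C.AntiLE (v ϖ) (w ϖ) := by
  obtain ⟨w₀, hw₀, hneg⟩ := C.exists_forall_isNeg_apply_simple
  refine Or.inr ⟨w₀⁻¹ (-ϖ), C.X_stable _ (inv_mem hw₀) _ (neg_mem hX), fun i => ?_,
    v * w₀, mul_mem (BruhatLE.mem_W h hw) hw₀, w * w₀, mul_mem hw hw₀,
    bruhatLE_mul_of_forall_isNeg hw₀ hneg hw h, by simp, by simp⟩
  rw [← C.pairing_apply_apply hw₀, LinearEquiv.coe_inv, LinearEquiv.apply_symm_apply,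
    pairing_neg_left, ← pairing_neg_right]
  exact hdom.pairing_nonneg (isPos_neg_iff.2 (hneg i))

end Weights

end RootSystemData

open RootSystemData

theorem statement_6_general
    {V : Type} [NormedAddCommGroup V] [InnerProductSpace ℝ V] [FiniteDimensional ℝ V]
    (C : RootSystemData V)
    (ϖ lam : V) (hX : ϖ ∈ C.X) (hdom : C.IsDominant ϖ)
    (w : V ≃ₗ[ℝ] V) (hw : w ∈ C.W) (hlam : lam = w ϖ)
    (hmin : ∀ u ∈ C.W, u ϖ = lam → C.length w ≤ C.length u)
    (j : Fin C.r) (hj1 : pairing ϖ (C.π j) = 1)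
    (hj2 : C.length w < C.length (w * C.s (C.π j)))
    (μ : V) (z : V ≃ₗ[ℝ] V) (hz : z ∈ C.W) (hμ : μ = w (ϖ - C.ω j) + z (C.ω j)) :
    ⟪μ, μ⟫_ℝ ≤ ⟪ϖ, ϖ⟫_ℝ ∧
    (⟪μ, μ⟫_ℝ = ⟪ϖ, ϖ⟫_ℝ → ∃ v ∈ C.W, C.BruhatLE w v ∧ μ = v ϖ) ∧
    C.AntiLE μ lam := by
  subst hlam
  set a := ϖ - C.ω j
  have ha : C.IsDominant a := hdom.sub_fund hj1.ge
  have hu : w⁻¹ * z ∈ C.W := mul_mem (inv_mem hw) hz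
  have hϖ : ϖ = a + C.ω j := by simp [a]
  have hμ' : μ = w (a + (w⁻¹ * z) (C.ω j)) := by simp [hμ, a]
  have hnorm : ⟪μ, μ⟫_ℝ = ⟪a + (w⁻¹ * z) (C.ω j), a + (w⁻¹ * z) (C.ω j)⟫_ℝ := by
    rw [hμ', C.inner_invariant w hw]
  have hle : ⟪μ, μ⟫_ℝ ≤ ⟪ϖ, ϖ⟫_ℝ :=
    hnorm ▸ hϖ ▸ inner_self_add_apply_le ha (isDominant_fund j) hu
  have heq : ⟪μ, μ⟫_ℝ = ⟪ϖ, ϖ⟫_ℝ → ∃ v ∈ C.W, C.BruhatLE w v ∧ μ = v ϖ := by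
    intro h
    obtain ⟨u, hu', huϖ⟩ := exists_mem_parabolic_of_inner_self_add_apply_eq ha
      (isDominant_fund j) hu (hnorm ▸ hϖ ▸ h)
    exact ⟨w * u, mul_mem hw (C.parabolic_le _ hu'), bruhatLE_mul_of_mem_parabolic hw
      (fun i => isPos_apply_simple_of_pairing_sub_fund_eq_zero hw hmin hj2) hu',
      by rw [LinearEquiv.mul_apply, hϖ, huϖ, hμ']⟩
  refine ⟨hle, heq, ?_⟩
  rcases hle.lt_or_eq with hlt | h
  · exact antiLE_of_inner_self_lt (by rwa [C.inner_invariant w hw])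
  · obtain ⟨v, -, hwv, rfl⟩ := heq h
    exact antiLE_apply_of_bruhatLE hX hdom hw hwv

/-- Let `ϖ ∈ X` be dominant with `(ϖ, α∨) ≤ 1` for every simple `α`, let
`λ = wϖ` with `w` of minimal length, and suppose `(ϖ, α_j∨) = 1` and `ℓ(w s_j) > ℓ(w)` for
some simple `α_j`.  Then every `μ ∈ w(ϖ - ω_j) + Wω_j` satisfies `(μ,μ) ≤ (ϖ,ϖ)`; if
`(μ,μ) = (ϖ,ϖ)` then `μ = vϖ` for some `v ≥ w`; and consequently `μ ≤ₐ λ`. -/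
theorem statement_6
    {V : Type} [NormedAddCommGroup V] [InnerProductSpace ℝ V] [FiniteDimensional ℝ V]
    (C : RootSystemData V)
    (ϖ lam : V) (hX : ϖ ∈ C.X) (hdom : C.IsDominant ϖ)
    (hsmall : ∀ i, pairing ϖ (C.π i) ≤ 1)
    (w : V ≃ₗ[ℝ] V) (hw : w ∈ C.W) (hlam : lam = w ϖ)
    (hmin : ∀ u ∈ C.W, u ϖ = lam → C.length w ≤ C.length u)
    (j : Fin C.r) (hj1 : pairing ϖ (C.π j) = 1)
    (hj2 : C.length w < C.length (w * C.s (C.π j)))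
    (μ : V) (z : V ≃ₗ[ℝ] V) (hz : z ∈ C.W) (hμ : μ = w (ϖ - C.ω j) + z (C.ω j)) :
    ⟪μ, μ⟫_ℝ ≤ ⟪ϖ, ϖ⟫_ℝ ∧
    (⟪μ, μ⟫_ℝ = ⟪ϖ, ϖ⟫_ℝ → ∃ v ∈ C.W, C.BruhatLE w v ∧ μ = v ϖ) ∧
    C.AntiLE μ lam :=
  statement_6_general C ϖ lam hX hdom w hw hlam hmin j hj1 hj2 μ z hz hμ
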